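/- arXiv:1502.03146 — 3 statements merged into one kernel-verified Lean document; each statement's English description precedes it below -/
import Mathlib

section
/- If G is a finite simple graph on n vertices and k a positive integer with f(G) < k, then there exist sets V_1, ..., V_n ⊆ V(G), each of size at most k, such that every edge of G is contained in the subgraph induced by some V_i, i.e., E(G) ⊆ ∪_{i=1}^n E(G[V_i]). -/
open SimpleGraph

variable {V : Type*} [Fintype V]

/-- An edge-ordering of `G`: a bijection from the edge set onto `{1, ..., |E(G)|}`. -/
def IsEdgeOrdering (G : SimpleGraph V) (φ : Sym2 V → ℕ) : Prop :=
  Set.BijOn φ G.edgeSet (Set.Icc 1 G.edgeSet.ncard)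

/-- `G` has an increasing path of length `ℓ` with respect to the labelling `φ`. -/
def HasIncPath (G : SimpleGraph V) (φ : Sym2 V → ℕ) (ℓ : ℕ) : Prop :=
  ∃ (u v : V) (p : G.Walk u v), p.IsPath ∧ List.Chain' (· < ·) (p.edges.map φ) ∧ p.length = ℓ

/-- `ψ(G, φ)`: the length of the longest increasing path under `φ`. -/
noncomputable def psi (G : SimpleGraph V) (φ : Sym2 V → ℕ) : ℕ :=
  sSup {ℓ | HasIncPath G φ ℓ}

/-- `f(G)`: the minimum over all edge-orderings of the longest increasing path length. -/
noncomputable def incf (G : SimpleGraph V) : ℕ :=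
  sInf {m | ∃ φ : Sym2 V → ℕ, IsEdgeOrdering G φ ∧ psi G φ = m}

/-!
Fix an edge-ordering `φ` with `ψ(G, φ) = f(G)` and process the edges in increasing order,
keeping for every vertex `x` an increasing path ending at `x`; its vertex set `S x` then has at most
`f(G) + 1 ≤ k` elements. Initially all paths are trivial. When the edge `ab` comes and no `S x`
contains both `a` and `b`, then `a ∉ S b` and `b ∉ S a`, so `a` and `b` may exchange their paths,
each extended by `ab`: as `ab` carries the largest label so far, these are again increasing paths.
The new sets `insert a (S b)` and `insert b (S a)` cover `ab` and everything `S a` and `S b`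
covered before, so at the end every edge lies in some `S x`.
-/

namespace SimpleGraph

variable {W : Type*} {G : SimpleGraph W} {φ : Sym2 W → ℕ} {t : ℕ}

namespace Walk

variable {u v b : W}

def IsIncPathBelow (φ : Sym2 W → ℕ) (t : ℕ) (w : G.Walk u v) : Prop :=
  w.IsPath ∧ (w.edges.map φ).IsChain (· < ·) ∧ ∀ e ∈ w.edges, φ e < t

theorem IsIncPathBelow.mono {w : G.Walk u v} (hw : w.IsIncPathBelow φ t) {t' : ℕ} (h : t ≤ t') :
    w.IsIncPathBelow φ t' :=
  ⟨hw.1, hw.2.1, fun e he => (hw.2.2 e he).trans_le h⟩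

theorem IsIncPathBelow.concat {w : G.Walk u v} (hw : w.IsIncPathBelow φ t) (hb : b ∉ w.support)
    (hvb : G.Adj v b) (ht : φ s(v, b) = t) : (w.concat hvb).IsIncPathBelow φ (t + 1) := by
  obtain ⟨hpath, hchain, hlt⟩ := hw
  refine ⟨hpath.concat hb hvb, ?_, ?_⟩
  · rw [edges_concat, List.concat_eq_append, List.map_append]
    refine hchain.append (List.isChain_singleton _) fun x hx y hy => ?_
    obtain ⟨e, he, rfl⟩ := List.mem_map.mp (List.mem_of_mem_getLast? hx)
    simp only [List.map_cons, List.map_nil, List.head?_cons, Option.mem_some_iff] at hy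
    exact hy ▸ ht ▸ hlt e he
  · intro e he
    rw [edges_concat, List.concat_eq_append, List.mem_append, List.mem_singleton] at he
    rcases he with he | rfl
    · exact (hlt e he).trans (Nat.lt_succ_self t)
    · exact ht ▸ Nat.lt_succ_self t

end Walk

variable [DecidableEq W]

def IsIncPathCover (G : SimpleGraph W) (φ : Sym2 W → ℕ) (t : ℕ) (S : W → Finset W) : Prop :=
  (∀ x, ∃ u, ∃ w : G.Walk u x, w.IsIncPathBelow φ t ∧ S x = w.support.toFinset) ∧
    ∀ e ∈ G.edgeSet, φ e < t → ∃ x, ∀ v ∈ e, v ∈ S x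

theorem isIncPathCover_zero : IsIncPathCover G φ 0 fun x => {x} :=
  ⟨fun x => ⟨x, .nil, ⟨.nil, List.isChain_nil, by simp⟩, by simp⟩, fun _ _ h => absurd h (by omega)⟩

namespace IsIncPathCover

variable {S : W → Finset W}

theorem mem_self (hS : IsIncPathCover G φ t S) (x : W) : x ∈ S x := by
  obtain ⟨u, w, -, hSx⟩ := hS.1 x
  exact hSx ▸ List.mem_toFinset.mpr w.end_mem_support

theorem succ_of_covered (hS : IsIncPathCover G φ t S)
    (hcov : ∀ e ∈ G.edgeSet, φ e = t → ∃ x, ∀ v ∈ e, v ∈ S x) :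
    IsIncPathCover G φ (t + 1) S := by
  refine ⟨fun x => ?_, fun e he hlt => ?_⟩
  · obtain ⟨u, w, hw, hSx⟩ := hS.1 x
    exact ⟨u, w, hw.mono t.le_succ, hSx⟩
  · rcases (Nat.lt_succ_iff_lt_or_eq.mp hlt) with hlt | heq
    · exact hS.2 e he hlt
    · exact hcov e he heq

theorem exists_extend (hS : IsIncPathCover G φ t S) {a b : W} (hba : G.Adj b a)
    (ht : φ s(b, a) = t) (ha : a ∉ S b) :
    ∃ u, ∃ w : G.Walk u a, w.IsIncPathBelow φ (t + 1) ∧ insert a (S b) = w.support.toFinset := by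
  obtain ⟨u, w, hw, hSb⟩ := hS.1 b
  refine ⟨u, w.concat hba, hw.concat (fun h => ha (hSb ▸ List.mem_toFinset.mpr h)) hba ht, ?_⟩
  ext v
  simp [hSb, Walk.support_concat]

theorem swap (hS : IsIncPathCover G φ t S) (hφ : Set.InjOn φ G.edgeSet)
    {a b : W} (hab : G.Adj a b) (ht : φ s(a, b) = t) (hnot : ∀ x, ¬(a ∈ S x ∧ b ∈ S x)) :
    IsIncPathCover G φ (t + 1)
      (Function.update (Function.update S a (insert a (S b))) b (insert b (S a))) := by
  have hba : b ≠ a := hab.ne'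
  refine ⟨fun x => ?_, fun e he hlt => ?_⟩
  · rcases eq_or_ne x b with rfl | hxb
    · simpa using hS.exists_extend hab ht fun h => hnot a ⟨hS.mem_self a, h⟩
    rcases eq_or_ne x a with rfl | hxa
    · simpa [hxb] using hS.exists_extend hab.symm (Sym2.eq_swap ▸ ht)
        fun h => hnot b ⟨h, hS.mem_self b⟩
    obtain ⟨u, w, hw, hSx⟩ := hS.1 x
    exact ⟨u, w, hw.mono t.le_succ, by simpa [hxa, hxb] using hSx⟩
  rcases (Nat.lt_succ_iff_lt_or_eq.mp hlt) with hlt | heq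
  · obtain ⟨x, hx⟩ := hS.2 e he hlt
    rcases eq_or_ne x a with rfl | hxa
    · exact ⟨b, fun v hv => by simpa using Or.inr (hx v hv)⟩
    rcases eq_or_ne x b with rfl | hxb
    · exact ⟨a, fun v hv => by simpa [hba.symm] using Or.inr (hx v hv)⟩
    exact ⟨x, fun v hv => by simpa [hxa, hxb] using hx v hv⟩
  · obtain rfl : e = s(a, b) := hφ he hab (heq.trans ht.symm)
    refine ⟨a, fun v hv => ?_⟩
    rcases Sym2.mem_iff.mp hv with rfl | rfl
    · simp [hab.ne]
    · simpa [hab.ne, hba] using hS.mem_self v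

end IsIncPathCover

theorem exists_isIncPathCover (hφ : Set.InjOn φ G.edgeSet) (t : ℕ) :
    ∃ S, IsIncPathCover G φ t S := by
  induction t with
  | zero => exact ⟨_, isIncPathCover_zero⟩
  | succ t ih =>
    obtain ⟨S, hS⟩ := ih
    by_cases hcov : ∀ e ∈ G.edgeSet, φ e = t → ∃ x, ∀ v ∈ e, v ∈ S x
    · exact ⟨S, hS.succ_of_covered hcov⟩
    push Not at hcov
    obtain ⟨e, he, ht, hnot⟩ := hcov
    induction e using Sym2.ind with
    | _ a b =>
      refine ⟨_, hS.swap hφ he ht fun x hx => ?_⟩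
      obtain ⟨v, hv, hvx⟩ := hnot x
      rcases Sym2.mem_iff.mp hv with rfl | rfl
      exacts [hvx hx.1, hvx hx.2]

theorem Walk.IsIncPathBelow.length_le_psi {G : SimpleGraph V} {φ : Sym2 V → ℕ} {t : ℕ} {u v : V}
    {w : G.Walk u v} (hw : w.IsIncPathBelow φ t) : w.length ≤ psi G φ :=
  le_csSup ⟨Fintype.card V, fun _ ⟨_, _, _, hp, _, hlen⟩ => hlen ▸ hp.length_lt.le⟩
    ⟨u, v, w, hw.1, hw.2.1, rfl⟩

theorem IsIncPathCover.card_le_psi_add_one [DecidableEq V] {G : SimpleGraph V}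
    {φ : Sym2 V → ℕ} {t : ℕ} {S : V → Finset V} (hS : IsIncPathCover G φ t S) (x : V) :
    (S x).card ≤ psi G φ + 1 := by
  obtain ⟨u, w, hw, hSx⟩ := hS.1 x
  calc (S x).card = w.support.toFinset.card := by rw [hSx]
    _ ≤ w.support.length := List.toFinset_card_le _
    _ = w.length + 1 := w.length_support
    _ ≤ psi G φ + 1 := Nat.succ_le_succ hw.length_le_psi

end SimpleGraph

theorem exists_isEdgeOrdering (G : SimpleGraph V) : ∃ φ, IsEdgeOrdering G φ :=
  G.edgeSet.toFinite.exists_bijOn_of_encard_eq <| by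
    rw [← G.edgeSet.toFinite.cast_ncard_eq, ← Finset.coe_Icc, Set.encard_coe_eq_coe_finsetCard,
      Nat.card_Icc, Nat.add_sub_cancel]

theorem exists_isEdgeOrdering_psi_eq_incf (G : SimpleGraph V) :
    ∃ φ, IsEdgeOrdering G φ ∧ psi G φ = incf G :=
  let ⟨φ, hφ⟩ := exists_isEdgeOrdering G
  Nat.sInf_mem (s := {m | ∃ φ, IsEdgeOrdering G φ ∧ psi G φ = m}) ⟨psi G φ, φ, hφ, rfl⟩

theorem exists_cover_of_incf_lt_general (G : SimpleGraph V) (k : ℕ)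
    (h : incf G < k) :
    ∃ Vs : Fin (Fintype.card V) → Finset V,
      (∀ i, (Vs i).card ≤ k) ∧ ∀ e ∈ G.edgeSet, ∃ i, ∀ v ∈ e, v ∈ Vs i := by
  classical
  obtain ⟨φ, hφ, hψ⟩ := exists_isEdgeOrdering_psi_eq_incf G
  obtain ⟨S, hS⟩ := SimpleGraph.exists_isIncPathCover hφ.injOn (G.edgeSet.ncard + 1)
  refine ⟨fun i => S ((Fintype.equivFin V).symm i), fun i => ?_, fun e he => ?_⟩
  · have := hS.card_le_psi_add_one ((Fintype.equivFin V).symm i)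
    dsimp only
    omega
  · obtain ⟨x, hx⟩ := hS.2 e he (Nat.lt_succ_of_le (hφ.mapsTo he).2)
    exact ⟨Fintype.equivFin V x, by simpa using hx⟩

/-- If `f(G) < k` then there are `n = |V(G)|` vertex sets, each of size at most `k`,
whose induced subgraphs cover all edges of `G`. -/
theorem exists_cover_of_incf_lt (G : SimpleGraph V) (k : ℕ) (hk : 0 < k)
    (h : incf G < k) :
    ∃ Vs : Fin (Fintype.card V) → Finset V,
      (∀ i, (Vs i).card ≤ k) ∧ ∀ e ∈ G.edgeSet, ∃ i, ∀ v ∈ e, v ∈ Vs i :=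
  exists_cover_of_incf_lt_general G k h
end

section
/- For all positive integers k and d, any set of at most k vertices in the d-dimensional hypercube Q_d induces at most (k log₂ k)/2 edges. -/
/-- The `d`-dimensional hypercube: vertices are `Fin d → Bool`, adjacent iff they
differ in exactly one coordinate. -/
def cubeGraph (d : ℕ) : SimpleGraph (Fin d → Bool) where
  Adj x y := ∃! i, x i ≠ y i
  symm := by
    constructor
    rintro x y ⟨i, hi, hu⟩
    exact ⟨i, hi.symm, fun j hj => hu j hj.symm⟩
  loopless := by
    constructor
    rintro x ⟨i, hi, -⟩
    exact hi rfl

/-!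
Split `Q_{d+1}` along the first coordinate into two copies of `Q_d`. The edges inside `S` are
then the edges inside the two slices `S₀, S₁ ⊆ Q_d`, plus one edge for each point of `S₀ ∩ S₁`.
Hence the number of ordered adjacent pairs in `S` is at most `|S| log₂ |S|`, by induction on `d`
from `a log a + b log b + 2 min(a, b) ≤ (a + b) log (a + b)`; for `a ≤ b` this is the sum of
`a log a + a ≤ a log (a + b)` (as `2a ≤ a + b`) and `b log b + a ≤ b log (a + b)`
(as `2 ^ t ≤ 1 + t` for `t ∈ [0, 1]`).
-/

open Finset Real

namespace SimpleGraph

variable {V : Type*} (G : SimpleGraph V) [DecidableRel G.Adj]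

theorem card_interedges_eq_sum (s t : Finset V) :
    #(G.interedges s t) = ∑ x ∈ s, ∑ y ∈ t, if G.Adj x y then 1 else 0 := by
  rw [interedges_def, card_filter, sum_product]

theorem two_mul_ncard_induced_edgeSet [Fintype V] (S : Finset V) :
    2 * {e ∈ G.edgeSet | ∀ v ∈ e, v ∈ S}.ncard = #(G.interedges S S) := by
  classical
  set T := {e ∈ G.edgeSet | ∀ v ∈ e, v ∈ S}
  have hT : (fromEdgeSet T).edgeSet = T := by
    rw [edgeSet_fromEdgeSet, sdiff_eq_left, Set.disjoint_left]
    exact fun e he => G.not_isDiag_of_mem_edgeSet he.1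
  rw [← hT, ← coe_edgeFinset, Set.ncard_coe_finset]
  convert two_mul_card_edgeFinset (fromEdgeSet T) using 1
  · congr!
  rw [interedges_def]
  congr 1
  ext ⟨x, y⟩
  simpa [T, and_comm, and_assoc] using fun _ _ h => G.ne_of_adj h

end SimpleGraph

instance (d : ℕ) : DecidableRel (cubeGraph d).Adj := fun x y =>
  inferInstanceAs (Decidable (∃ i, x i ≠ y i ∧ ∀ j, x j ≠ y j → j = i))


theorem cubeGraph_adj_cons {d : ℕ} {a b : Bool} {s t : Fin d → Bool} :
    (cubeGraph (d + 1)).Adj (Fin.cons a s) (Fin.cons b t) ↔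
      if a = b then (cubeGraph d).Adj s t else s = t := by
  simp only [cubeGraph, ExistsUnique, Fin.exists_fin_succ, Fin.forall_fin_succ, Fin.cons_zero,
    Fin.cons_succ]
  split_ifs with hab
  · simp [hab, Fin.succ_ne_zero]
  · simp [hab, funext_iff, (Fin.succ_ne_zero _).symm]

theorem cubeGraph_zero_adj (x y : Fin 0 → Bool) : ¬(cubeGraph 0).Adj x y :=
  fun ⟨i, _⟩ => i.elim0

section ConsSlice

variable {n : ℕ} {α : Type*}

noncomputable def consSlice (S : Finset (Fin (n + 1) → α)) (a : α) : Finset (Fin n → α) :=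
  S.preimage (fun t => Fin.cons a t) (Fin.cons_right_injective (α := fun _ => α) a).injOn

theorem sum_eq_sum_sum_consSlice [Fintype α] [DecidableEq α] {M : Type*} [AddCommMonoid M]
    (S : Finset (Fin (n + 1) → α)) (f : (Fin (n + 1) → α) → M) :
    ∑ x ∈ S, f x = ∑ a, ∑ t ∈ consSlice S a, f (Fin.cons a t) := by
  rw [← sum_fiberwise S (· 0)]
  refine Fintype.sum_congr _ _ fun a => ?_
  rw [consSlice, sum_preimage']
  refine sum_congr (filter_congr fun x _ => ?_) fun _ _ => rfl
  exact ⟨fun h => ⟨Fin.tail x, h ▸ Fin.cons_self_tail x⟩, by rintro ⟨t, rfl⟩; rfl⟩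

theorem card_eq_sum_card_consSlice [Fintype α] [DecidableEq α] (S : Finset (Fin (n + 1) → α)) :
    #S = ∑ a, #(consSlice S a) := by
  simp only [card_eq_sum_ones]
  exact sum_eq_sum_sum_consSlice S (fun _ => 1)

end ConsSlice

theorem card_interedges_cubeGraph_succ {d : ℕ} (S : Finset (Fin (d + 1) → Bool)) :
    #((cubeGraph (d + 1)).interedges S S) =
      #((cubeGraph d).interedges (consSlice S false) (consSlice S false)) +
        #((cubeGraph d).interedges (consSlice S true) (consSlice S true)) +
          2 * #(consSlice S false ∩ consSlice S true) := by
  rw [SimpleGraph.card_interedges_eq_sum]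
  simp only [sum_eq_sum_sum_consSlice S, Fintype.sum_bool, cubeGraph_adj_cons, reduceCtorEq,
    if_true, if_false, sum_add_distrib, sum_ite_eq, ← SimpleGraph.card_interedges_eq_sum]
  rw [sum_boole, sum_boole, Nat.cast_id, Nat.cast_id, filter_mem_eq_inter, filter_mem_eq_inter,
    inter_comm (consSlice S true)]
  ring

theorem le_logb_two_one_add {t : ℝ} (h₀ : 0 ≤ t) (h₁ : t ≤ 1) : t ≤ logb 2 (1 + t) := by
  have hpow : (2 : ℝ) ^ t ≤ 1 + t := by
    simpa [one_add_one_eq_two, mul_one] using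
      rpow_one_add_le_one_add_mul_self (s := 1) (by norm_num) h₀ h₁
  calc t = logb 2 (2 ^ t) := (logb_rpow two_pos (by norm_num)).symm
    _ ≤ logb 2 (1 + t) := logb_le_logb_of_le one_lt_two (by positivity) hpow

theorem mul_logb_add_mul_logb_add_two_mul_le {a b : ℝ} (ha : 0 ≤ a) (hab : a ≤ b) :
    a * logb 2 a + b * logb 2 b + 2 * a ≤ (a + b) * logb 2 (a + b) := by
  rcases ha.eq_or_lt with rfl | ha
  · simp
  have hb : 0 < b := ha.trans_le hab
  have hsmall : a * logb 2 a + a ≤ a * logb 2 (a + b) := by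
    have hlog : logb 2 (2 * a) ≤ logb 2 (a + b) :=
      logb_le_logb_of_le one_lt_two (by positivity) (by linarith)
    rw [logb_mul two_ne_zero ha.ne', logb_self_eq_one one_lt_two] at hlog
    linarith [mul_le_mul_of_nonneg_left hlog ha.le]
  have hlarge : b * logb 2 b + a ≤ b * logb 2 (a + b) := by
    have hsplit : a + b = b * (1 + a / b) := by field_simp; ring
    have hlog := le_logb_two_one_add (div_nonneg ha.le hb.le) ((div_le_one hb).2 hab)
    have hmul := mul_le_mul_of_nonneg_left hlog hb.le
    rw [mul_div_cancel₀ _ hb.ne'] at hmul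
    rw [hsplit, logb_mul hb.ne' (by positivity), mul_add]
    linarith
  linarith

theorem mul_logb_add_mul_logb_add_two_mul_min_le {a b : ℝ} (ha : 0 ≤ a) (hb : 0 ≤ b) :
    a * logb 2 a + b * logb 2 b + 2 * min a b ≤ (a + b) * logb 2 (a + b) := by
  rcases le_total a b with hab | hba
  · simpa [min_eq_left hab] using mul_logb_add_mul_logb_add_two_mul_le ha hab
  · simpa [min_eq_right hba, add_comm, add_left_comm] using
      mul_logb_add_mul_logb_add_two_mul_le hb hba

theorem natCast_mul_logb_two_mono : Monotone fun n : ℕ => (n : ℝ) * logb 2 n := by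
  intro m n hmn
  rcases m.eq_zero_or_pos with rfl | hm
  · simp only [CharP.cast_eq_zero, zero_mul]
    exact mul_nonneg n.cast_nonneg (div_nonneg (log_natCast_nonneg n) (log_nonneg one_le_two))
  · have hm : (1 : ℝ) ≤ m := Nat.one_le_cast.2 hm
    have hmn : (m : ℝ) ≤ n := Nat.cast_le.2 hmn
    exact mul_le_mul hmn (logb_le_logb_of_le one_lt_two (by positivity) hmn)
      (logb_nonneg one_lt_two hm) (by positivity)

theorem card_interedges_cubeGraph_le (d : ℕ) (S : Finset (Fin d → Bool)) :
    (#((cubeGraph d).interedges S S) : ℝ) ≤ #S * logb 2 #S := by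
  induction d with
  | zero =>
    have hempty : (cubeGraph 0).interedges S S = ∅ :=
      filter_false_of_mem fun p _ => cubeGraph_zero_adj p.1 p.2
    simpa [hempty] using natCast_mul_logb_two_mono (Nat.zero_le #S)
  | succ d ih =>
    set A := consSlice S false
    set B := consSlice S true
    have hcard : #S = #A + #B := by
      rw [card_eq_sum_card_consSlice, Fintype.sum_bool, add_comm]
    have hinter : (#(A ∩ B) : ℝ) ≤ min (#A : ℝ) #B := by
      exact_mod_cast le_min (card_le_card inter_subset_left) (card_le_card inter_subset_right)
    calc (#((cubeGraph (d + 1)).interedges S S) : ℝ)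
        = #((cubeGraph d).interedges A A) + #((cubeGraph d).interedges B B) + 2 * #(A ∩ B) := by
          exact_mod_cast card_interedges_cubeGraph_succ S
      _ ≤ #A * logb 2 #A + #B * logb 2 #B + 2 * min (#A : ℝ) #B := by
          gcongr
          exacts [ih A, ih B]
      _ ≤ #S * logb 2 #S := by
          rw [hcard, Nat.cast_add]
          exact mul_logb_add_mul_logb_add_two_mul_min_le (Nat.cast_nonneg _) (Nat.cast_nonneg _)

theorem cube_induced_edges_le_general (k d : ℕ)
    (S : Finset (Fin d → Bool)) (hS : S.card ≤ k) :
    ({e ∈ (cubeGraph d).edgeSet | ∀ v ∈ e, v ∈ S}.ncard : ℝ) ≤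
      k * Real.logb 2 k / 2 := by
  have htwice : (2 * {e ∈ (cubeGraph d).edgeSet | ∀ v ∈ e, v ∈ S}.ncard : ℝ) =
      #((cubeGraph d).interedges S S) := by
    exact_mod_cast (cubeGraph d).two_mul_ncard_induced_edgeSet S
  have hbound := (card_interedges_cubeGraph_le d S).trans (natCast_mul_logb_two_mono hS)
  linarith

/-- Any set of at most `k` vertices of the `d`-dimensional hypercube induces at most
`(k log₂ k)/2` edges. -/
theorem cube_induced_edges_le (k d : ℕ) (hk : 0 < k) (hd : 0 < d)
    (S : Finset (Fin d → Bool)) (hS : S.card ≤ k) :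
    ({e ∈ (cubeGraph d).edgeSet | ∀ v ∈ e, v ∈ S}.ncard : ℝ) ≤
      k * Real.logb 2 k / 2 :=
  cube_induced_edges_le_general k d S hS
end

section
/- Let G be a finite simple graph on n vertices with an edge-ordering φ admitting no increasing path of length k, and let P_1,...,P_n be the paths traversed by the pedestrians in the pedestrian algorithm, with V_i the vertex set of P_i, E_i its edge set, and U_i the edge set induced by V_i. Then |E(G)| ≤ Σ_{i=1}^n (|U_i| − |E_i|/2). -/
/-!
Process the edges one by one. If the pedestrians at the endpoints `u`, `v` of the current
edge swap, their walks grow by one edge each and from then on both have visited `u` and `v`,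
so the edge is induced by two of the final walks; if they do not swap, some pedestrian has
already visited both `u` and `v`. Hence `2 |E| + Σᵢ |E_i| ≤ 2 Σᵢ |U_i|`. That a swap
involves exactly two distinct pedestrians rests on the invariant that the current positions
of the pedestrians form a permutation of the vertices.
-/

open scoped Classical

variable {V : Type*} [Fintype V]

/-- The pedestrians at `u` and `v` may swap: neither would move to a vertex it has
already visited.  `st p` is the (reversed) list of vertices visited by pedestrian `p`,
whose head is its current position. -/
def SwapCond (u v : V) (st : V → List V) : Prop :=
  ∀ p : V, ((st p).head? = some u → v ∉ st p) ∧ ((st p).head? = some v → u ∉ st p)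

/-- One step of the pedestrian algorithm, processing the edge `{u, v}`. -/
noncomputable def pedStep (u v : V) (st : V → List V) : V → List V := fun p =>
  if SwapCond u v st then
    if (st p).head? = some u then v :: st p
    else if (st p).head? = some v then u :: st p
    else st p
  else st p

/-- Run the pedestrian algorithm on the list of edges `L` (listed in increasing order
of the edge-ordering), starting with pedestrian `p` on vertex `p`. -/
noncomputable def pedRun (L : List (V × V)) : V → List V :=
  L.foldl (fun st uv => pedStep uv.1 uv.2 st) (fun v => [v])

/-- `L` lists the edges of `G`, each exactly once; the corresponding edge-ordering
assigns labels according to position in `L`. -/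
def IsEdgeListOf (G : SimpleGraph V) (L : List (V × V)) : Prop :=
  (∀ uv ∈ L, G.Adj uv.1 uv.2) ∧ (L.map fun uv => s(uv.1, uv.2)).Nodup ∧
    {e | e ∈ L.map fun uv => s(uv.1, uv.2)} = G.edgeSet

/-- Under the edge-ordering given by the list `L`, `G` has no increasing path of
length `k`: a path is increasing iff its edges occur as a sublist of `L`. -/
def NoIncPathOfLen (G : SimpleGraph V) (L : List (V × V)) (k : ℕ) : Prop :=
  ∀ (u v : V) (p : G.Walk u v), p.IsPath →
    p.edges.Sublist (L.map fun uv => s(uv.1, uv.2)) → p.length < k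


open scoped Finset

noncomputable def pedRunFrom (L : List (V × V)) (st : V → List V) : V → List V :=
  L.foldl (fun st uv => pedStep uv.1 uv.2 st) st

section Step

omit [Fintype V]

variable {σ : Equiv.Perm V} {st : V → List V} {u v : V}

lemma pedRunFrom_cons (L : List (V × V)) :
    pedRunFrom ((u, v) :: L) st = pedRunFrom L (pedStep u v st) := rfl

lemma mem_pedStep_of_mem {p x : V} (hx : x ∈ st p) : x ∈ pedStep u v st p := by
  unfold pedStep
  split_ifs <;> simp [hx]

lemma mem_pedRunFrom_of_mem {p x : V} (L : List (V × V)) (hx : x ∈ st p) :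
    x ∈ pedRunFrom L st p := by
  induction L generalizing st with
  | nil => exact hx
  | cons uv L ih => exact ih (mem_pedStep_of_mem hx)

lemma pedStep_of_not_swapCond (h : ¬SwapCond u v st) : pedStep u v st = st := by
  funext p
  simp [pedStep, h]

lemma exists_mem_mem_of_not_swapCond (h : ¬SwapCond u v st) : ∃ p, u ∈ st p ∧ v ∈ st p := by
  simp only [SwapCond, not_forall, not_and_or, not_not] at h
  obtain ⟨p, ⟨hu, hv⟩ | ⟨hv, hu⟩⟩ := h
  · exact ⟨p, List.mem_of_mem_head? hu, hv⟩
  · exact ⟨p, hu, List.mem_of_mem_head? hv⟩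

lemma pedStep_of_swapCond (hσ : ∀ p, (st p).head? = some (σ p)) (h : SwapCond u v st) (p : V) :
    pedStep u v st p =
      if σ p = u then v :: st p else if σ p = v then u :: st p else st p := by
  simp only [pedStep, if_pos h, hσ p, Option.some_inj]

lemma exists_perm_head?_pedStep (hσ : ∀ p, (st p).head? = some (σ p)) :
    ∃ τ : Equiv.Perm V, ∀ p, (pedStep u v st p).head? = some (τ p) := by
  by_cases h : SwapCond u v st
  · refine ⟨σ.trans (Equiv.swap u v), fun p => ?_⟩
    rw [pedStep_of_swapCond hσ h, Equiv.trans_apply]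
    split_ifs with hu hv
    · simp [hu]
    · simp [hv, Equiv.swap_apply_right]
    · simp [hσ p, Equiv.swap_apply_of_ne_of_ne hu hv]
  · exact ⟨σ, by rwa [pedStep_of_not_swapCond h]⟩

end Step

section Counting

variable {σ : Equiv.Perm V} {st : V → List V} {u v : V}

lemma sum_length_pedStep_of_swapCond (hσ : ∀ p, (st p).head? = some (σ p)) (huv : u ≠ v)
    (h : SwapCond u v st) :
    ∑ p, (pedStep u v st p).length = ∑ p, (st p).length + 2 := by
  have hlen (p : V) : (pedStep u v st p).length =
      (st p).length + if σ p = u ∨ σ p = v then 1 else 0 := by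
    rw [pedStep_of_swapCond hσ h]
    split_ifs <;> simp_all
  have hpair : ({w | w = u ∨ w = v} : Finset V) = {u, v} := by ext; simp
  simp only [hlen, Finset.sum_add_distrib,
    Equiv.sum_comp σ fun w => if w = u ∨ w = v then 1 else 0, Finset.sum_boole, hpair,
    Finset.card_pair huv, Nat.cast_ofNat]

lemma two_le_card_pedStep_of_swapCond (hσ : ∀ p, (st p).head? = some (σ p)) (huv : u ≠ v)
    (h : SwapCond u v st) :
    2 ≤ #{p | u ∈ pedStep u v st p ∧ v ∈ pedStep u v st p} := by
  have hu : u ∈ st (σ.symm u) := List.mem_of_mem_head? (by simp [hσ])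
  have hv : v ∈ st (σ.symm v) := List.mem_of_mem_head? (by simp [hσ])
  refine Finset.one_lt_card.mpr ⟨σ.symm u, ?_, σ.symm v, ?_, by simpa using huv⟩
  · simp [pedStep_of_swapCond hσ h, hu]
  · simp [pedStep_of_swapCond hσ h, hv, huv.symm]

lemma two_add_sum_length_pedStep_le (hσ : ∀ p, (st p).head? = some (σ p)) (huv : u ≠ v) :
    2 + ∑ p, (pedStep u v st p).length ≤
      2 * #{p | u ∈ pedStep u v st p ∧ v ∈ pedStep u v st p} + ∑ p, (st p).length := by
  by_cases h : SwapCond u v st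
  · have := two_le_card_pedStep_of_swapCond hσ huv h
    rw [sum_length_pedStep_of_swapCond hσ huv h]
    omega
  · obtain ⟨p, hpu, hpv⟩ := exists_mem_mem_of_not_swapCond h
    have : 0 < #{p | u ∈ st p ∧ v ∈ st p} := Finset.card_pos.mpr ⟨p, by simp [hpu, hpv]⟩
    rw [pedStep_of_not_swapCond h]
    omega

lemma two_mul_length_add_sum_length_pedRunFrom_le {L : List (V × V)}
    (hL : ∀ uv ∈ L, uv.1 ≠ uv.2) (hσ : ∀ p, (st p).head? = some (σ p)) :
    2 * L.length + ∑ p, (pedRunFrom L st p).length ≤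
      2 * ∑ p, L.countP (fun uv => uv.1 ∈ pedRunFrom L st p ∧ uv.2 ∈ pedRunFrom L st p) +
        ∑ p, (st p).length := by
  induction L generalizing σ st with
  | nil => simp [pedRunFrom]
  | cons uv L ih =>
    obtain ⟨u, v⟩ := uv
    obtain ⟨τ, hτ⟩ := exists_perm_head?_pedStep (u := u) (v := v) hσ
    have hrest := ih (fun uv huv => hL uv (List.mem_cons_of_mem _ huv)) hτ
    have hstep := two_add_sum_length_pedStep_le (u := u) (v := v) hσ (hL _ List.mem_cons_self)
    have hmono : #{p | u ∈ pedStep u v st p ∧ v ∈ pedStep u v st p} ≤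
        #{p | u ∈ pedRunFrom L (pedStep u v st) p ∧ v ∈ pedRunFrom L (pedStep u v st) p} :=
      Finset.card_le_card <| Finset.monotone_filter_right _ fun _ _ hp =>
        ⟨mem_pedRunFrom_of_mem L hp.1, mem_pedRunFrom_of_mem L hp.2⟩
    have hcons (F : V → List V) :
        ∑ p, ((u, v) :: L).countP (fun uv => uv.1 ∈ F p ∧ uv.2 ∈ F p) =
          ∑ p, L.countP (fun uv => uv.1 ∈ F p ∧ uv.2 ∈ F p) + #{p | u ∈ F p ∧ v ∈ F p} := by
      simp [List.countP_cons, Finset.sum_add_distrib, Finset.sum_boole]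
    rw [pedRunFrom_cons, hcons, List.length_cons]
    omega

lemma two_mul_length_add_sum_length_pedRun_le {L : List (V × V)} (hL : ∀ uv ∈ L, uv.1 ≠ uv.2) :
    2 * L.length + ∑ i, (pedRun L i).length ≤
      2 * ∑ i, L.countP (fun uv => uv.1 ∈ pedRun L i ∧ uv.2 ∈ pedRun L i) + Fintype.card V := by
  have h := two_mul_length_add_sum_length_pedRunFrom_le hL (σ := 1) (st := fun v => [v])
    (by simp)
  simp only [List.length_singleton, Finset.sum_const, Finset.card_univ, smul_eq_mul,
    mul_one] at h
  exact h

end Counting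

omit [Fintype V] in
lemma IsEdgeListOf.ncard_sep_eq_countP {G : SimpleGraph V} {L : List (V × V)}
    (hL : IsEdgeListOf G L) (P : Sym2 V → Prop) :
    {e ∈ G.edgeSet | P e}.ncard = L.countP fun uv => P s(uv.1, uv.2) := by
  obtain ⟨-, hnodup, hedges⟩ := hL
  have hset : {e ∈ G.edgeSet | P e} =
      ↑((L.map fun uv => s(uv.1, uv.2)).filter fun e => P e).toFinset := by
    ext e
    simp [← hedges]
  rw [hset, Set.ncard_coe_finset, List.toFinset_card_of_nodup (hnodup.filter _),
    ← List.countP_eq_length_filter, List.countP_map]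
  rfl

theorem edge_count_le_pedestrian_sum_general (G : SimpleGraph V) (L : List (V × V))
    (hL : IsEdgeListOf G L) :
    (G.edgeSet.ncard : ℝ) ≤
      ∑ i : V, (({e ∈ G.edgeSet | ∀ v ∈ e, v ∈ pedRun L i}.ncard : ℝ) -
        (((pedRun L i).length : ℝ) - 1) / 2) := by
  have hedges : G.edgeSet.ncard = L.length := by
    simpa using hL.ncard_sep_eq_countP fun _ => True
  have hinduced (i : V) : {e ∈ G.edgeSet | ∀ v ∈ e, v ∈ pedRun L i}.ncard =
      L.countP (fun uv => uv.1 ∈ pedRun L i ∧ uv.2 ∈ pedRun L i) := by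
    simp [hL.ncard_sep_eq_countP]
  have hcount : 2 * (L.length : ℝ) + ∑ i, ((pedRun L i).length : ℝ) ≤
      2 * ∑ i, (L.countP (fun uv => uv.1 ∈ pedRun L i ∧ uv.2 ∈ pedRun L i) : ℝ) +
        Fintype.card V := by
    exact_mod_cast two_mul_length_add_sum_length_pedRun_le fun uv huv => (hL.1 uv huv).ne
  simp only [hedges, hinduced, Finset.sum_sub_distrib, ← Finset.sum_div, Finset.sum_const,
    Finset.card_univ, nsmul_eq_mul, mul_one]
  linarith

/-- If the edge-ordering given by `L` admits no increasing path of length `k`, then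
with `U_i` the edges induced by the vertices visited by pedestrian `i` and `E_i` the
edges traversed by pedestrian `i`, we have `|E(G)| ≤ Σᵢ (|U_i| - |E_i|/2)`. -/
theorem edge_count_le_pedestrian_sum (G : SimpleGraph V) (L : List (V × V)) (k : ℕ)
    (hL : IsEdgeListOf G L) (hno : NoIncPathOfLen G L k) :
    (G.edgeSet.ncard : ℝ) ≤
      ∑ i : V, (({e ∈ G.edgeSet | ∀ v ∈ e, v ∈ pedRun L i}.ncard : ℝ) -
        (((pedRun L i).length : ℝ) - 1) / 2) :=
  edge_count_le_pedestrian_sum_general G L hL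
end
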